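/- arXiv:1405.1707 — 6 statements merged into one kernel-verified Lean document; each statement's English description precedes it below -/
import Mathlib

section
/- Let λ, μ, r₁, s₁, r₂, s₂ ∈ ℂ with c_{L,I} := λ - μ ≠ 0 and c_L := 2 - 12(λ² - μ²). Set h = Δ_{r₁,s₁}, h_I = r₁ - s₁, h' = Δ_{r₂,s₂}, h_I' = r₂ - s₂, where Δ_{r,s} = r²/2 - s²/2 - λr + μs. If h_I ≠ c_{L,I} and h_I' ≠ c_{L,I} and h_I + h_I' ≠ c_{L,I}, then Δ_{r₁+r₂, s₁+s₂} = (h_I' + h_I - c_{L,I})·(h'/(h_I' - c_{L,I}) + h/(h_I - c_{L,I})) - h_I·h_I'·(1/(h_I' - c_{L,I}) + 1/(h_I - c_{L,I}))·(c_L - 2)/(24 c_{L,I}). -/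
/-!
With `h_I = r - s` and `c = λ - μ`, the weight splits as
`Δ_{r,s} = (h_I - c)(r + s)/2 - (λ + μ) h_I / 2`, and `(c_L - 2)/(24 c) = -(λ + μ)/2`.
The part of the identity linear in `r + s` is then immediate, and the part proportional to
`λ + μ` is the rational identity
`(u + v - c)(u/(u - c) + v/(v - c)) - u v (1/(u - c) + 1/(v - c)) = u + v`.
-/

section FockWeight

variable {K : Type*} [Field K] [CharZero K]

lemma fockWeight_eq (lam mu r s : K) :
    r ^ 2 / 2 - s ^ 2 / 2 - lam * r + mu * s =
      (r - s - (lam - mu)) * (r + s) / 2 - (lam + mu) * (r - s) / 2 := by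
  ring

lemma fockWeight_div (lam mu r s : K) (h : r - s ≠ lam - mu) :
    (r ^ 2 / 2 - s ^ 2 / 2 - lam * r + mu * s) / (r - s - (lam - mu)) =
      (r + s) / 2 - (lam + mu) / 2 * ((r - s) / (r - s - (lam - mu))) := by
  have h' : r - s - (lam - mu) ≠ 0 := sub_ne_zero.mpr h
  rw [fockWeight_eq]
  field_simp

lemma centralCharge_sub_two_div (lam mu : K) (hc : lam - mu ≠ 0) :
    (2 - 12 * (lam ^ 2 - mu ^ 2) - 2) / (24 * (lam - mu)) = -(lam + mu) / 2 := by
  field_simp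
  ring

end FockWeight

lemma fusion_rational_identity {K : Type*} [Field K] (u v c : K) (hu : u ≠ c) (hv : v ≠ c) :
    (v + u - c) * (v / (v - c) + u / (u - c)) - u * v * (1 / (v - c) + 1 / (u - c)) =
      u + v := by
  have hu' : u - c ≠ 0 := sub_ne_zero.mpr hu
  have hv' : v - c ≠ 0 := sub_ne_zero.mpr hv
  field_simp
  ring

theorem fusion_conformal_weight_general (lam mu r1 s1 r2 s2 c cL h hI h' hI' : ℂ)
    (hc0 : lam - mu ≠ 0) (hc : c = lam - mu) (hcL : cL = 2 - 12 * (lam ^ 2 - mu ^ 2))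
    (hh : h = r1 ^ 2 / 2 - s1 ^ 2 / 2 - lam * r1 + mu * s1) (hhI : hI = r1 - s1)
    (hh' : h' = r2 ^ 2 / 2 - s2 ^ 2 / 2 - lam * r2 + mu * s2) (hhI' : hI' = r2 - s2)
    (h1 : hI ≠ c) (h2 : hI' ≠ c) :
    (r1 + r2) ^ 2 / 2 - (s1 + s2) ^ 2 / 2 - lam * (r1 + r2) + mu * (s1 + s2) =
      (hI' + hI - c) * (h' / (hI' - c) + h / (hI - c)) -
        hI * hI' * (1 / (hI' - c) + 1 / (hI - c)) * ((cL - 2) / (24 * c)) := by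
  subst hc hcL hh hhI hh' hhI'
  rw [fockWeight_div lam mu r1 s1 h1, fockWeight_div lam mu r2 s2 h2,
    centralCharge_sub_two_div lam mu hc0]
  linear_combination (lam + mu) / 2 *
    fusion_rational_identity (r1 - s1) (r2 - s2) (lam - mu) h1 h2

/-- The conformal weight of the target Fock module of the intertwining operator:
with `c_{L,I} = λ - μ ≠ 0`, `c_L = 2 - 12(λ² - μ²)`, `h = Δ_{r₁,s₁}`, `h_I = r₁ - s₁`,
`h' = Δ_{r₂,s₂}`, `h_I' = r₂ - s₂`, and `h_I, h_I', h_I + h_I' ≠ c_{L,I}`, one has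
`Δ_{r₁+r₂, s₁+s₂} = (h_I' + h_I - c_{L,I})(h'/(h_I' - c_{L,I}) + h/(h_I - c_{L,I}))
  - h_I h_I' (1/(h_I' - c_{L,I}) + 1/(h_I - c_{L,I})) (c_L - 2)/(24 c_{L,I})`. -/
theorem fusion_conformal_weight (lam mu r1 s1 r2 s2 c cL h hI h' hI' : ℂ)
    (hc0 : lam - mu ≠ 0) (hc : c = lam - mu) (hcL : cL = 2 - 12 * (lam ^ 2 - mu ^ 2))
    (hh : h = r1 ^ 2 / 2 - s1 ^ 2 / 2 - lam * r1 + mu * s1) (hhI : hI = r1 - s1)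
    (hh' : h' = r2 ^ 2 / 2 - s2 ^ 2 / 2 - lam * r2 + mu * s2) (hhI' : hI' = r2 - s2)
    (h1 : hI ≠ c) (h2 : hI' ≠ c) (h3 : hI + hI' ≠ c) :
    (r1 + r2) ^ 2 / 2 - (s1 + s2) ^ 2 / 2 - lam * (r1 + r2) + mu * (s1 + s2) =
      (hI' + hI - c) * (h' / (hI' - c) + h / (hI - c)) -
        hI * hI' * (1 / (hI' - c) + 1 / (hI - c)) * ((cL - 2) / (24 * c)) :=
  fusion_conformal_weight_general lam mu r1 s1 r2 s2 c cL h hI h' hI' hc0 hc hcL hh hhI hh' hhI' h1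
    h2
end

section
/- Let λ, μ, r₁, s₁, r₂, s₂ ∈ ℂ with c_{L,I} := λ - μ ≠ 0, c_L := 2 - 12(λ² - μ²), Δ_{r,s} := r²/2 - s²/2 - λr + μs, h = Δ_{r₁,s₁}, h_I = r₁ - s₁, h' = Δ_{r₂,s₂}, h_I' = r₂ - s₂. Suppose there exist positive integers p, q with h_I/c_{L,I} - 1 = -q and h_I'/c_{L,I} - 1 = p. Then Δ_{r₂-r₁, s₂-s₁} = (p + q - 1)(h'/p + h/q) + (1-p)(1-q)(1/p + 1/q)(c_L - 2)/24. -/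
/-!
The hypotheses on `h_I` and `h_I'` put `(r₁, s₁)` and `(r₂, s₂)` on the lines
`r - s = (λ - μ)(1 - q)` and `r - s = (λ - μ)(1 + p)`, hence `(r₂ - r₁, s₂ - s₁)` on
`r - s = (λ - μ)(p + q)`. On a line `r - s = (λ - μ) a` the weight `Δ_{r,s}` is affine in `s`
with slope `(λ - μ)(a - 1)`, so the terms in `s₁, s₂` agree on both sides and what remains is
a rational identity in `λ, μ, p, q`.
-/

namespace FreeField

noncomputable def confWeight (lam mu r s : ℂ) : ℂ := r ^ 2 / 2 - s ^ 2 / 2 - lam * r + mu * s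

theorem confWeight_eq_of_sub_eq {lam mu r s a : ℂ} (h : r - s = (lam - mu) * a) :
    confWeight lam mu r s = (lam - mu) * ((a - 1) * s + (lam - mu) * a ^ 2 / 2 - lam * a) := by
  rw [confWeight, eq_add_of_sub_eq h]
  ring

theorem eq_mul_of_div_sub_one_eq {K : Type*} [Field K] {x c a : K} (hc : c ≠ 0)
    (h : x / c - 1 = a) : x = c * (a + 1) := by
  rw [← h, sub_add_cancel, mul_div_cancel₀ x hc]

end FreeField

open FreeField in
/-- The conformal weight formula for the adjoint intertwining operator: with
`c_{L,I} = λ - μ ≠ 0`, `c_L = 2 - 12(λ² - μ²)`, `h = Δ_{r₁,s₁}`, `h_I = r₁ - s₁`,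
`h' = Δ_{r₂,s₂}`, `h_I' = r₂ - s₂`, and positive integers `p, q` with
`h_I/c_{L,I} - 1 = -q` and `h_I'/c_{L,I} - 1 = p`, one has
`Δ_{r₂-r₁, s₂-s₁} = (p+q-1)(h'/p + h/q) + (1-p)(1-q)(1/p + 1/q)(c_L - 2)/24`. -/
theorem adjoint_fusion_conformal_weight (lam mu r1 s1 r2 s2 c cL h hI h' hI' : ℂ)
    (hc0 : lam - mu ≠ 0) (hc : c = lam - mu) (hcL : cL = 2 - 12 * (lam ^ 2 - mu ^ 2))
    (hh : h = r1 ^ 2 / 2 - s1 ^ 2 / 2 - lam * r1 + mu * s1) (hhI : hI = r1 - s1)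
    (hh' : h' = r2 ^ 2 / 2 - s2 ^ 2 / 2 - lam * r2 + mu * s2) (hhI' : hI' = r2 - s2)
    (p q : ℕ) (hp : 0 < p) (hq : 0 < q)
    (hq' : hI / c - 1 = -(q : ℂ)) (hp' : hI' / c - 1 = (p : ℂ)) :
    (r2 - r1) ^ 2 / 2 - (s2 - s1) ^ 2 / 2 - lam * (r2 - r1) + mu * (s2 - s1) =
      ((p : ℂ) + q - 1) * (h' / p + h / q) +
        (1 - (p : ℂ)) * (1 - (q : ℂ)) * (1 / p + 1 / q) * ((cL - 2) / 24) := by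
  subst hc hhI hhI'
  have hpc : (p : ℂ) ≠ 0 := by exact_mod_cast hp.ne'
  have hqc : (q : ℂ) ≠ 0 := by exact_mod_cast hq.ne'
  have hr1 := eq_mul_of_div_sub_one_eq hc0 hq'
  have hr2 := eq_mul_of_div_sub_one_eq hc0 hp'
  have hr : r2 - r1 - (s2 - s1) = (lam - mu) * (p + q) := by
    linear_combination hr2 - hr1
  change confWeight lam mu (r2 - r1) (s2 - s1) = _
  rw [confWeight_eq_of_sub_eq hr, hh.trans (confWeight_eq_of_sub_eq hr1),
    hh'.trans (confWeight_eq_of_sub_eq hr2), hcL]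
  field_simp
  ring
end

section
/- For the Verma module V over the twisted Heisenberg-Virasoro algebra (with [L(n),I(m)] = -m I(n+m) - δ_{n,-m}(n²+n)c_{L,I}) with c_I = 0, highest weight (h, h_I) and h_I/c_{L,I} - 1 = p ∈ ℤ_{>0}, the vector S_p(-I(-1)/c_{L,I}, -I(-2)/c_{L,I}, ..., -I(-p)/c_{L,I})·v is annihilated by I(n) for all n ≥ 1. -/
/-- The Schur polynomials `S_r(x_1, x_2, ...)`, defined as the coefficients of the
generating function `exp (∑_{n ≥ 1} (x_n/n) y^n) = ∑_{r ≥ 0} S_r y^r`.  Since the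
series `g = ∑_{n ≥ 1} (x_n/n) y^n` has zero constant term, the coefficient of `y^r`
in `exp g = ∑_k g^k / k!` only receives contributions from `k ≤ r`. -/
noncomputable def schur {A : Type*} [Ring A] [Algebra ℂ A] (x : ℕ → A) (r : ℕ) : A :=
  ∑ k ∈ Finset.range (r + 1),
    ((Nat.factorial k : ℂ)⁻¹) •
      (PowerSeries.coeff (R := A) r
        ((PowerSeries.mk fun n => if n = 0 then 0 else ((n : ℂ)⁻¹) • x n) ^ k))

/-- The generalized binomial coefficient `binom(z, r) = z(z-1)⋯(z-r+1)/r!`. -/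
noncomputable def cchoose (z : ℂ) (r : ℕ) : ℂ :=
  (∏ i ∈ Finset.range r, (z - i)) / (Nat.factorial r)


/-- A representation of the twisted Heisenberg-Virasoro algebra `HVir` at level zero
(`C_I` acts by `0`), with the central elements `C_L`, `C_{LI}` acting by the scalars
`cL`, `cLI`. -/
structure HVirRep (V : Type*) [AddCommGroup V] [Module ℂ V] where
  L : ℤ → Module.End ℂ V
  I : ℤ → Module.End ℂ V
  cL : ℂ
  cLI : ℂ
  rel_LL : ∀ n m : ℤ, L n * L m - L m * L n =
    ((n : ℂ) - m) • L (n + m) +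
      (if n + m = 0 then (((n : ℂ) ^ 3 - n) / 12) * cL else 0) • (1 : Module.End ℂ V)
  rel_LI : ∀ n m : ℤ, L n * I m - I m * L n =
    (-(m : ℂ)) • I (n + m) -
      (if n + m = 0 then ((n : ℂ) ^ 2 + n) * cLI else 0) • (1 : Module.End ℂ V)
  rel_II : ∀ n m : ℤ, I n * I m = I m * I n

lemma comm_coeff_pow {A : Type*} [Ring A] (a : A) (φ : PowerSeries A)
    (h : ∀ r : ℕ, Commute a (PowerSeries.coeff (R := A) r φ)) (k r : ℕ) :
    Commute a (PowerSeries.coeff (R := A) r (φ ^ k)) := by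
  induction k generalizing r with
  | zero =>
    rw [pow_zero, PowerSeries.coeff_one]
    split
    · exact Commute.one_right a
    · exact Commute.zero_right a
  | succ k ih =>
    rw [pow_succ, PowerSeries.coeff_mul]
    exact Commute.sum_right _ _ _ fun ij _ => (ih ij.1).mul_right (h ij.2)

/-- In any highest weight representation of the twisted Heisenberg-Virasoro algebra at
level zero (`C_I = 0`) with highest weight `(h, h_I)` and `h_I/c_{L,I} - 1 = p ∈ ℤ_{>0}`
(in particular in the Verma module), the vector
`S_p(-I(-1)/c_{L,I}, …, -I(-p)/c_{L,I}) · v` is annihilated by `I(n)` for all `n ≥ 1`. -/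
theorem I_annihilates_schur_vector {V : Type*} [AddCommGroup V] [Module ℂ V]
    (ρ : HVirRep V) (v : V) (h hI : ℂ) (hc : ρ.cLI ≠ 0)
    (hLv : ∀ n : ℤ, 0 < n → ρ.L n v = 0) (hIv : ∀ n : ℤ, 0 < n → ρ.I n v = 0)
    (hL0 : ρ.L 0 v = h • v) (hI0 : ρ.I 0 v = hI • v)
    (p : ℕ) (hp : 0 < p) (hpd : hI / ρ.cLI - 1 = (p : ℂ)) :
    ∀ n : ℤ, 1 ≤ n →
      ρ.I n ((schur (fun j => (-(ρ.cLI)⁻¹) • ρ.I (-(j : ℤ))) p) v) = 0 := by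
  intro n hn
  set S := schur (fun j => (-(ρ.cLI)⁻¹) • ρ.I (-(j : ℤ))) p with hS
  have hcomm : Commute (ρ.I n) S := by
    apply Commute.sum_right
    intro k _
    apply Commute.smul_right
    apply comm_coeff_pow
    intro r
    rw [PowerSeries.coeff_mk]
    split
    · exact Commute.zero_right _
    · exact Commute.smul_right (Commute.smul_right (ρ.rel_II n (-(r : ℤ))) _) _
  have h1 : ρ.I n (S v) = S (ρ.I n v) := by
    have := congrArg (fun T : Module.End ℂ V => T v) hcomm.eq
    simpa [Module.End.mul_apply] using this
  rw [h1, hIv n (by exact_mod_cast hn), map_zero]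
end

section
/- Let V be the Verma module over the twisted Heisenberg-Virasoro algebra with c_I = 0, c_{L,I} ≠ 0, and h_I/c_{L,I} - 1 = p ∈ ℤ_{>0}. Then the vector Ω = S_p(-I(-1)/c_{L,I}, ..., -I(-p)/c_{L,I})·v_{h,h_I} satisfies L(n)Ω = 0 for all n ≥ 1 and I(n)Ω = 0 for all n ≥ 1; i.e., Ω is a singular vector of conformal weight h + p. -/
open PowerSeries Finset
open scoped Nat

section DerivSeries
variable {R : Type*} [Semiring R]

noncomputable def derivSeries (f : R⟦X⟧) : R⟦X⟧ := mk fun n => (n + 1) • coeff (n + 1) f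

@[simp]
lemma coeff_derivSeries (f : R⟦X⟧) (n : ℕ) :
    coeff n (derivSeries f) = (n + 1) • coeff (n + 1) f :=
  coeff_mk _ _

@[simp]
lemma derivSeries_one : derivSeries (1 : R⟦X⟧) = 0 := by
  ext n
  simp [coeff_one]

lemma derivSeries_mul (f g : R⟦X⟧) :
    derivSeries (f * g) = derivSeries f * g + f * derivSeries g := by
  ext n
  have hf : ∑ q ∈ antidiagonal n, coeff q.1 (derivSeries f) * coeff q.2 g
      = ∑ q ∈ antidiagonal (n + 1), q.1 • (coeff q.1 f * coeff q.2 g) := by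
    rw [Nat.sum_antidiagonal_succ]
    simp only [coeff_derivSeries, zero_smul, zero_add, smul_mul_assoc]
  have hg : ∑ q ∈ antidiagonal n, coeff q.1 f * coeff q.2 (derivSeries g)
      = ∑ q ∈ antidiagonal (n + 1), q.2 • (coeff q.1 f * coeff q.2 g) := by
    rw [Nat.sum_antidiagonal_succ']
    simp only [coeff_derivSeries, zero_smul, zero_add, mul_smul_comm]
  rw [map_add, coeff_mul, coeff_mul, hf, hg, ← sum_add_distrib, coeff_derivSeries, coeff_mul,
    smul_sum]
  refine sum_congr rfl fun q hq => ?_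
  rw [← add_smul, mem_antidiagonal.mp hq]

lemma derivSeries_pow_succ {f : R⟦X⟧} (hf : Commute f (derivSeries f)) (k : ℕ) :
    derivSeries (f ^ (k + 1)) = (k + 1) • (derivSeries f * f ^ k) := by
  induction k with
  | zero => simp
  | succ k ih =>
    rw [pow_succ, derivSeries_mul, ih, smul_mul_assoc, mul_assoc, ← pow_succ,
      (hf.pow_left (k + 1)).eq, ← succ_nsmul]

lemma PowerSeries.commute_of_coeff {f g : R⟦X⟧}
    (h : ∀ i j, Commute (coeff i f) (coeff j g)) : Commute f g := by
  ext n
  rw [coeff_mul, coeff_mul, ← Nat.sum_antidiagonal_swap]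
  exact sum_congr rfl fun q _ => (h q.2 q.1).eq

end DerivSeries

section Schur
variable {A : Type*} [Ring A] [Algebra ℂ A] (x : ℕ → A)

noncomputable def schurExponent : A⟦X⟧ := mk fun n => if n = 0 then 0 else (n : ℂ)⁻¹ • x n

lemma schur_eq_sum_coeff_pow (r : ℕ) :
    schur x r = ∑ k ∈ range (r + 1), (k ! : ℂ)⁻¹ • coeff r (schurExponent x ^ k) :=
  rfl

lemma coeff_schurExponent_pow_of_lt {r k : ℕ} (h : r < k) :
    coeff r (schurExponent x ^ k) = 0 := by
  have hX : X ∣ schurExponent x := by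
    rw [X_dvd_iff]
    simp [schurExponent]
  obtain ⟨f, hf⟩ := hX
  rw [hf, (commute_X f).symm.mul_pow]
  exact X_pow_dvd_iff.mp (dvd_mul_right _ _) r h

lemma schur_eq_sum_range {r N : ℕ} (h : r < N) :
    schur x r = ∑ k ∈ range N, (k ! : ℂ)⁻¹ • coeff r (schurExponent x ^ k) := by
  rw [schur_eq_sum_coeff_pow]
  refine sum_subset (range_subset_range.mpr h) fun k _ hk => ?_
  rw [coeff_schurExponent_pow_of_lt x (by simp at hk; omega), smul_zero]

@[simp]
lemma schur_zero : schur x 0 = 1 := by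
  simp [schur_eq_sum_coeff_pow]

lemma derivSeries_schurExponent : derivSeries (schurExponent x) = mk fun n => x (n + 1) := by
  ext n
  rw [coeff_derivSeries, coeff_mk, schurExponent, coeff_mk, if_neg n.succ_ne_zero,
    ← Nat.cast_smul_eq_nsmul ℂ, smul_smul,
    mul_inv_cancel₀ (Nat.cast_ne_zero.mpr n.succ_ne_zero), one_smul]

variable {x}

lemma commute_schurExponent_derivSeries (hx : ∀ i j, Commute (x i) (x j)) :
    Commute (schurExponent x) (derivSeries (schurExponent x)) := by
  refine commute_of_coeff fun i j => ?_
  rw [derivSeries_schurExponent, coeff_mk, schurExponent, coeff_mk]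
  split_ifs
  · exact Commute.zero_left _
  · exact (hx i (j + 1)).smul_left _

theorem smul_schur (hx : ∀ i j, Commute (x i) (x j)) (s : ℕ) :
    (s : ℂ) • schur x s = ∑ i ∈ range s, x (i + 1) * schur x (s - 1 - i) := by
  rcases s with _ | r
  · simp
  have hfac (k : ℕ) (a : A) : ((k + 1)! : ℂ)⁻¹ • (k + 1) • a = (k ! : ℂ)⁻¹ • a := by
    rw [← Nat.cast_smul_eq_nsmul ℂ, smul_smul, Nat.factorial_succ]
    congr 1
    push_cast
    field_simp
  calc ((r + 1 : ℕ) : ℂ) • schur x (r + 1)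
      = ∑ k ∈ range (r + 2), (k ! : ℂ)⁻¹ • coeff r (derivSeries (schurExponent x ^ k)) := by
        rw [schur_eq_sum_coeff_pow, smul_sum]
        refine sum_congr rfl fun k _ => ?_
        rw [coeff_derivSeries, ← Nat.cast_smul_eq_nsmul ℂ, smul_comm]
    _ = ∑ k ∈ range (r + 1),
          (k ! : ℂ)⁻¹ • coeff r (derivSeries (schurExponent x) * schurExponent x ^ k) := by
        rw [sum_range_succ']
        simp only [pow_zero, derivSeries_one, map_zero, smul_zero, add_zero,
          derivSeries_pow_succ (commute_schurExponent_derivSeries hx), map_nsmul, hfac]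
    _ = ∑ q ∈ antidiagonal r, x (q.1 + 1) *
          ∑ k ∈ range (r + 1), (k ! : ℂ)⁻¹ • coeff q.2 (schurExponent x ^ k) := by
        simp only [coeff_mul, smul_sum, mul_sum]
        rw [sum_comm]
        refine sum_congr rfl fun q _ => sum_congr rfl fun k _ => ?_
        rw [derivSeries_schurExponent, coeff_mk, mul_smul_comm]
    _ = ∑ i ∈ range (r + 1), x (i + 1) * schur x (r + 1 - 1 - i) := by
        rw [Nat.sum_antidiagonal_eq_sum_range_succ_mk]
        refine sum_congr rfl fun i _ => ?_
        rw [schur_eq_sum_range x (N := r + 1) (by omega)]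
        rfl

lemma Commute.schur_right {a : A} (ha : ∀ i, Commute a (x i)) (r : ℕ) :
    Commute a (schur x r) := by
  have hC : Commute (C a) (schurExponent x) := commute_of_coeff fun i j => by
    simp only [coeff_C, schurExponent, coeff_mk]
    split_ifs
    exacts [Commute.zero_right _, (ha j).smul_right _, Commute.zero_left _, Commute.zero_left _]
  refine Commute.sum_right _ _ _ fun k _ => Commute.smul_right ?_ _
  have h := congrArg (coeff r) (hC.pow_right k).eq
  rwa [coeff_C_mul, coeff_mul_C] at h

lemma mul_schur_eq_of_mul_eq (hx : ∀ i j, Commute (x i) (x j)) {D : A}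
    (hD : ∀ j, D * x j = x j * D + (j : ℂ) • x j) (r : ℕ) :
    D * schur x r = schur x r * D + (r : ℂ) • schur x r := by
  induction r using Nat.strong_induction_on with
  | _ r ih =>
  rcases r.eq_zero_or_pos with rfl | hr
  · simp
  have key : D * ((r : ℂ) • schur x r)
      = ((r : ℂ) • schur x r) * D + (r : ℂ) • ((r : ℂ) • schur x r) := by
    rw [smul_schur hx r, mul_sum, sum_mul, smul_sum, ← sum_add_distrib]
    refine sum_congr rfl fun i hi => ?_
    have hi : i < r := mem_range.mp hi
    rw [← mul_assoc, hD, add_mul, mul_assoc, ih _ (by omega), mul_add, smul_mul_assoc,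
      ← mul_assoc, mul_smul_comm, add_assoc, ← add_smul]
    congr 2
    push_cast [Nat.sub_sub, Nat.cast_sub (show 1 + i ≤ r by omega)]
    ring
  rw [mul_smul_comm, smul_mul_assoc, ← smul_add] at key
  exact smul_right_injective A (show (r : ℂ) ≠ 0 by exact_mod_cast hr.ne') key

end Schur

namespace HVirRep
variable {V : Type*} [AddCommGroup V] [Module ℂ V] (ρ : HVirRep V)

/-- `x_j = -I(-j)/c_{L,I}`, so that `Ω = S_p(x_1, …, x_p) v`. -/
noncomputable def scaledI (j : ℕ) : Module.End ℂ V := (-ρ.cLI⁻¹) • ρ.I (-(j : ℤ))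

lemma I_commute (m n : ℤ) : Commute (ρ.I m) (ρ.I n) := ρ.rel_II m n

lemma scaledI_commute (i j : ℕ) : Commute (ρ.scaledI i) (ρ.scaledI j) :=
  ((ρ.I_commute _ _).smul_left _).smul_right _

lemma I_commute_schur (m : ℤ) (r : ℕ) : Commute (ρ.I m) (schur ρ.scaledI r) :=
  Commute.schur_right (fun _ => (ρ.I_commute _ _).smul_right _) r

lemma I_schur_apply (m : ℤ) (r : ℕ) (v : V) :
    ρ.I m (schur ρ.scaledI r v) = schur ρ.scaledI r (ρ.I m v) :=
  LinearMap.congr_fun (ρ.I_commute_schur m r).eq v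

lemma L_mul_scaledI (hc : ρ.cLI ≠ 0) (n : ℤ) (j : ℕ) :
    ρ.L n * ρ.scaledI j = ρ.scaledI j * ρ.L n - ((j : ℂ) / ρ.cLI) • ρ.I (n - j)
      + (if n = j then (n : ℂ) ^ 2 + n else 0) • 1 := by
  rw [scaledI, mul_smul_comm, sub_eq_iff_eq_add'.mp (ρ.rel_LI n (-j)), smul_mul_assoc,
    ← sub_eq_add_neg]
  simp only [sub_eq_zero]
  split_ifs with hnj
  · subst hnj
    match_scalars <;> field_simp
  · module

lemma L_zero_mul_schur (hc : ρ.cLI ≠ 0) (r : ℕ) :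
    ρ.L 0 * schur ρ.scaledI r = schur ρ.scaledI r * ρ.L 0 + (r : ℂ) • schur ρ.scaledI r := by
  refine mul_schur_eq_of_mul_eq ρ.scaledI_commute (fun j => ?_) r
  rw [L_mul_scaledI ρ hc, scaledI, Int.cast_zero, zero_sub, zero_pow two_ne_zero, add_zero,
    ite_self, zero_smul, add_zero]
  module

lemma smul_schur_apply (v : V) (s : ℕ) :
    (s : ℂ) • schur ρ.scaledI s v
      = ∑ i ∈ range s, ρ.scaledI (i + 1) (schur ρ.scaledI (s - 1 - i) v) := by
  simpa using LinearMap.congr_fun (smul_schur ρ.scaledI_commute s) v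

def IsIHighestWeight (μ : ℂ) (w : V) : Prop :=
  (∀ k : ℤ, 0 < k → ρ.I k w = 0) ∧ ρ.I 0 w = μ • w

variable {ρ}

lemma IsIHighestWeight.schur_apply {μ : ℂ} {w : V} (hw : ρ.IsIHighestWeight μ w) (r : ℕ) :
    ρ.IsIHighestWeight μ (schur ρ.scaledI r w) := by
  refine ⟨fun k hk => ?_, ?_⟩
  · rw [ρ.I_schur_apply, hw.1 k hk, map_zero]
  · rw [ρ.I_schur_apply, hw.2, map_smul]

lemma L_scaledI_apply (hc : ρ.cLI ≠ 0) {p : ℕ} {w : V}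
    (hw : ρ.IsIHighestWeight ((p + 1) * ρ.cLI) w) (n j : ℕ) :
    ρ.L n (ρ.scaledI j w) = ρ.scaledI j (ρ.L n w)
      + (if j = n then ((n : ℂ) * (n - p)) • w else 0)
      + (if n < j then (j : ℂ) • ρ.scaledI (j - n) w else 0) := by
  rw [← Module.End.mul_apply, L_mul_scaledI ρ hc]
  simp only [LinearMap.add_apply, LinearMap.sub_apply, LinearMap.smul_apply,
    Module.End.mul_apply, Module.End.one_apply, Nat.cast_inj, Int.cast_natCast]
  rcases lt_trichotomy j n with hjn | rfl | hnj
  · rw [hw.1 _ (by omega), if_neg hjn.ne', if_neg hjn.ne, if_neg (by omega)]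
    simp
  · rw [sub_self, hw.2, if_pos rfl, if_pos rfl, if_neg (lt_irrefl _), smul_smul,
      show (j : ℂ) / ρ.cLI * ((p + 1) * ρ.cLI) = j * (p + 1) by field_simp]
    module
  · rw [if_neg hnj.ne, if_neg hnj.ne', if_pos hnj, show (n : ℤ) - j = -((j - n : ℕ) : ℤ) by omega]
    simp only [scaledI, LinearMap.smul_apply]
    module

lemma smul_L_schur_apply (hc : ρ.cLI ≠ 0) {p : ℕ} {v : V}
    (hv : ρ.IsIHighestWeight ((p + 1) * ρ.cLI) v) (n s : ℕ) :
    (s : ℂ) • ρ.L n (schur ρ.scaledI s v)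
      = ∑ i ∈ range s, (ρ.scaledI (i + 1) (ρ.L n (schur ρ.scaledI (s - 1 - i) v))
        + (if i + 1 = n then ((n : ℂ) * (n - p)) • schur ρ.scaledI (s - 1 - i) v else 0)
        + (if n < i + 1 then ((i + 1 : ℕ) : ℂ) •
            ρ.scaledI (i + 1 - n) (schur ρ.scaledI (s - 1 - i) v) else 0)) := by
  rw [← map_smul, smul_schur_apply, map_sum]
  exact sum_congr rfl fun i _ => L_scaledI_apply hc (hv.schur_apply _) n (i + 1)

lemma L_schur_apply_of_lt (hc : ρ.cLI ≠ 0) {p : ℕ} {v : V} (hLv : ∀ k : ℤ, 0 < k → ρ.L k v = 0)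
    (hv : ρ.IsIHighestWeight ((p + 1) * ρ.cLI) v) {n r : ℕ} (hr : r < n) :
    ρ.L n (schur ρ.scaledI r v) = 0 := by
  induction r using Nat.strong_induction_on with
  | _ r ih =>
  rcases r.eq_zero_or_pos with rfl | hr0
  · simpa using hLv n (by omega)
  have h := smul_L_schur_apply hc hv n r
  rw [sum_eq_zero fun i hi => ?_] at h
  · exact (smul_eq_zero.mp h).resolve_left (by exact_mod_cast hr0.ne')
  · have hi : i < r := mem_range.mp hi
    rw [ih _ (by omega) (by omega), if_neg (by omega), if_neg (by omega), map_zero, add_zero,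
      add_zero]

lemma smul_L_schur_apply_add (hc : ρ.cLI ≠ 0) {p : ℕ} {v : V}
    (hLv : ∀ k : ℤ, 0 < k → ρ.L k v = 0) (hv : ρ.IsIHighestWeight ((p + 1) * ρ.cLI) v)
    {n : ℕ} (hn : 0 < n) (m : ℕ) :
    ((m + n : ℕ) : ℂ) • ρ.L n (schur ρ.scaledI (m + n) v)
      = ∑ i ∈ range m, (ρ.scaledI (i + 1) (ρ.L n (schur ρ.scaledI (m - 1 - i + n) v))
          + ((n + i + 1 : ℕ) : ℂ) • ρ.scaledI (i + 1) (schur ρ.scaledI (m - 1 - i) v))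
        + ((n : ℂ) * (n - p)) • schur ρ.scaledI m v := by
  have hx : ∑ i ∈ range (m + n), ρ.scaledI (i + 1) (ρ.L n (schur ρ.scaledI (m + n - 1 - i) v))
      = ∑ i ∈ range m, ρ.scaledI (i + 1) (ρ.L n (schur ρ.scaledI (m - 1 - i + n) v)) := by
    rw [sum_range_add, sum_eq_zero (s := range n) fun k hk => ?_, add_zero]
    · exact sum_congr rfl fun i hi => by
        rw [show m + n - 1 - i = m - 1 - i + n by simp at hi; omega]
    · rw [L_schur_apply_of_lt hc hLv hv (by simp at hk; omega), map_zero]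
  have hself : ∑ i ∈ range (m + n),
      (if i + 1 = n then ((n : ℂ) * (n - p)) • schur ρ.scaledI (m + n - 1 - i) v else 0)
        = ((n : ℂ) * (n - p)) • schur ρ.scaledI m v := by
    rw [sum_eq_single (n - 1) (fun i _ hi => if_neg (by omega))
      (fun h => absurd (mem_range.mpr (by omega)) h), if_pos (by omega),
      show m + n - 1 - (n - 1) = m by omega]
  have hgt : ∑ i ∈ range (m + n), (if n < i + 1 then ((i + 1 : ℕ) : ℂ) •
        ρ.scaledI (i + 1 - n) (schur ρ.scaledI (m + n - 1 - i) v) else 0)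
      = ∑ i ∈ range m,
          ((n + i + 1 : ℕ) : ℂ) • ρ.scaledI (i + 1) (schur ρ.scaledI (m - 1 - i) v) := by
    rw [add_comm m n, sum_range_add, sum_eq_zero fun i hi => if_neg (by simp at hi; omega),
      zero_add]
    refine sum_congr rfl fun i hi => ?_
    rw [if_pos (by omega), show n + i + 1 - n = i + 1 by omega,
      show n + m - 1 - (n + i) = m - 1 - i by omega]
  rw [smul_L_schur_apply hc hv, sum_add_distrib, sum_add_distrib, hx, hself, hgt,
    add_right_comm, ← sum_add_distrib]

lemma L_schur_apply_add (hc : ρ.cLI ≠ 0) {p : ℕ} {v : V} (hLv : ∀ k : ℤ, 0 < k → ρ.L k v = 0)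
    (hv : ρ.IsIHighestWeight ((p + 1) * ρ.cLI) v) {n : ℕ} (hn : 0 < n) (m : ℕ) :
    ρ.L n (schur ρ.scaledI (m + n) v) = (((m + n : ℕ) : ℂ) - p) • schur ρ.scaledI m v := by
  induction m using Nat.strong_induction_on with
  | _ m ih =>
  have hsum : ∑ i ∈ range m, (ρ.scaledI (i + 1) (ρ.L n (schur ρ.scaledI (m - 1 - i + n) v))
        + ((n + i + 1 : ℕ) : ℂ) • ρ.scaledI (i + 1) (schur ρ.scaledI (m - 1 - i) v))
      = (((m : ℂ) + 2 * n - p) * m) • schur ρ.scaledI m v := by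
    rw [mul_smul, smul_schur_apply, smul_sum]
    refine sum_congr rfl fun i hi => ?_
    have hi : i < m := mem_range.mp hi
    rw [ih _ (by omega), map_smul, ← add_smul]
    congr 1
    push_cast [Nat.sub_sub, Nat.cast_sub (show 1 + i ≤ m by omega)]
    ring
  have h := smul_L_schur_apply_add hc hLv hv hn m
  rw [hsum, ← add_smul] at h
  refine smul_right_injective V (show ((m + n : ℕ) : ℂ) ≠ 0 by exact_mod_cast (by omega)) ?_
  dsimp only
  rw [h, smul_smul]
  congr 1
  push_cast
  ring

end HVirRep

theorem schur_singular_vector_general {V : Type*} [AddCommGroup V] [Module ℂ V]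
    (ρ : HVirRep V) (v : V) (h hI : ℂ) (hc : ρ.cLI ≠ 0)
    (hLv : ∀ n : ℤ, 0 < n → ρ.L n v = 0) (hIv : ∀ n : ℤ, 0 < n → ρ.I n v = 0)
    (hL0 : ρ.L 0 v = h • v) (hI0 : ρ.I 0 v = hI • v)
    (p : ℕ) (hpd : hI / ρ.cLI - 1 = (p : ℂ)) :
    (∀ n : ℤ, 1 ≤ n →
        ρ.L n ((schur (fun j => (-(ρ.cLI)⁻¹) • ρ.I (-(j : ℤ))) p) v) = 0 ∧
        ρ.I n ((schur (fun j => (-(ρ.cLI)⁻¹) • ρ.I (-(j : ℤ))) p) v) = 0) ∧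
      ρ.L 0 ((schur (fun j => (-(ρ.cLI)⁻¹) • ρ.I (-(j : ℤ))) p) v) =
        (h + p) • ((schur (fun j => (-(ρ.cLI)⁻¹) • ρ.I (-(j : ℤ))) p) v) := by
  change (∀ n : ℤ, 1 ≤ n → ρ.L n (schur ρ.scaledI p v) = 0 ∧ ρ.I n (schur ρ.scaledI p v) = 0) ∧
    ρ.L 0 (schur ρ.scaledI p v) = (h + p) • schur ρ.scaledI p v
  have hv : ρ.IsIHighestWeight ((p + 1) * ρ.cLI) v := by
    refine ⟨hIv, ?_⟩
    rw [hI0, ← sub_eq_iff_eq_add.mp hpd, div_mul_cancel₀ _ hc]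
  refine ⟨fun n hn => ⟨?_, ?_⟩, ?_⟩
  · lift n to ℕ using by omega
    rcases le_or_gt n p with hnp | hpn
    · have h := HVirRep.L_schur_apply_add hc hLv hv (n := n) (by omega) (p - n)
      rwa [Nat.sub_add_cancel hnp, sub_self, zero_smul] at h
    · exact HVirRep.L_schur_apply_of_lt hc hLv hv hpn
  · rw [ρ.I_schur_apply, hIv n (by omega), map_zero]
  · rw [← Module.End.mul_apply, ρ.L_zero_mul_schur hc, LinearMap.add_apply, Module.End.mul_apply,
      hL0, map_smul, LinearMap.smul_apply, add_smul]

/-- In any highest weight representation of the twisted Heisenberg-Virasoro algebra at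
level zero (`C_I = 0`, `c_{L,I} ≠ 0`) with highest weight `(h, h_I)` and
`h_I/c_{L,I} - 1 = p ∈ ℤ_{>0}` (in particular in the Verma module
`V^{HVir}(c_L, 0, c_{L,I}, h, h_I)`), the vector
`Ω = S_p(-I(-1)/c_{L,I}, …, -I(-p)/c_{L,I}) · v` is a singular vector of conformal
weight `h + p`:  `L(n)Ω = I(n)Ω = 0` for all `n ≥ 1` and `L(0)Ω = (h + p)Ω`. -/
theorem schur_singular_vector {V : Type*} [AddCommGroup V] [Module ℂ V]
    (ρ : HVirRep V) (v : V) (h hI : ℂ) (hc : ρ.cLI ≠ 0)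
    (hLv : ∀ n : ℤ, 0 < n → ρ.L n v = 0) (hIv : ∀ n : ℤ, 0 < n → ρ.I n v = 0)
    (hL0 : ρ.L 0 v = h • v) (hI0 : ρ.I 0 v = hI • v)
    (p : ℕ) (hp : 0 < p) (hpd : hI / ρ.cLI - 1 = (p : ℂ)) :
    (∀ n : ℤ, 1 ≤ n →
        ρ.L n ((schur (fun j => (-(ρ.cLI)⁻¹) • ρ.I (-(j : ℤ))) p) v) = 0 ∧
        ρ.I n ((schur (fun j => (-(ρ.cLI)⁻¹) • ρ.I (-(j : ℤ))) p) v) = 0) ∧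
      ρ.L 0 ((schur (fun j => (-(ρ.cLI)⁻¹) • ρ.I (-(j : ℤ))) p) v) =
        (h + p) • ((schur (fun j => (-(ρ.cLI)⁻¹) • ρ.I (-(j : ℤ))) p) v) :=
  schur_singular_vector_general ρ v h hI hc hLv hIv hL0 hI0 p hpd
end

section
/- In the twisted Heisenberg-Virasoro Verma module with c_I = 0, c_{L,I} ≠ 0 and h_I = 0 (so p = 1), the vector Λ = (L(-1) + (h/c_{L,I})·I(-1))·v is a singular vector: L(n)Λ = I(n)Λ = 0 for all n ≥ 1. -/
namespace HVirRep

variable {V : Type*} [AddCommGroup V] [Module ℂ V] (ρ : HVirRep V)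

theorem L_apply_L_neg_one (n : ℤ) (w : V) :
    ρ.L n (ρ.L (-1) w) = ρ.L (-1) (ρ.L n w) + ((n : ℂ) + 1) • ρ.L (n - 1) w := by
  have hcomm := LinearMap.congr_fun (ρ.rel_LL n (-1)) w
  have hcentral : (if n + -1 = 0 then (((n : ℂ) ^ 3 - n) / 12) * ρ.cL else 0) = 0 := by
    obtain rfl | h1 := eq_or_ne n 1
    · norm_num
    · simp [show n + -1 ≠ 0 by omega]
  simp only [hcentral, zero_smul, add_zero, LinearMap.sub_apply, LinearMap.smul_apply,
    Module.End.mul_apply] at hcomm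
  rw [← sub_eq_iff_eq_add', hcomm, ← sub_eq_add_neg]
  push_cast
  ring_nf

theorem L_apply_I_neg_one (n : ℤ) (w : V) :
    ρ.L n (ρ.I (-1) w) =
      ρ.I (-1) (ρ.L n w) + ρ.I (n - 1) w - (if n = 1 then 2 * ρ.cLI else 0) • w := by
  have hcomm := LinearMap.congr_fun (ρ.rel_LI n (-1)) w
  have hcentral : (if n + -1 = 0 then ((n : ℂ) ^ 2 + n) * ρ.cLI else 0) =
      if n = 1 then 2 * ρ.cLI else 0 := by
    obtain rfl | h1 := eq_or_ne n 1
    · norm_num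
    · simp [h1, show n + -1 ≠ 0 by omega]
  simp only [hcentral, LinearMap.sub_apply, LinearMap.smul_apply, Module.End.mul_apply,
    Module.End.one_apply, Int.cast_neg, Int.cast_one, neg_neg, one_smul] at hcomm
  rw [add_sub_assoc, ← sub_eq_iff_eq_add', hcomm, ← sub_eq_add_neg]

theorem I_apply_L_neg_one (n : ℤ) (w : V) :
    ρ.I n (ρ.L (-1) w) = ρ.L (-1) (ρ.I n w) + (n : ℂ) • ρ.I (n - 1) w := by
  have hcomm := LinearMap.congr_fun (ρ.rel_LI (-1) n) w
  have hcentral : (if -1 + n = 0 then (((-1 : ℤ) : ℂ) ^ 2 + ((-1 : ℤ) : ℂ)) * ρ.cLI else 0)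
      = 0 := by
    simp
  simp only [hcentral, zero_smul, sub_zero, LinearMap.sub_apply, LinearMap.smul_apply,
    Module.End.mul_apply] at hcomm
  rw [← sub_eq_iff_eq_add', ← neg_sub, hcomm, neg_smul, neg_neg, neg_add_eq_sub]

theorem I_apply_I (n m : ℤ) (w : V) : ρ.I n (ρ.I m w) = ρ.I m (ρ.I n w) :=
  LinearMap.congr_fun (ρ.rel_II n m) w

end HVirRep

/-- In any highest weight representation of the twisted Heisenberg-Virasoro algebra at
level zero with `c_{L,I} ≠ 0` and highest weight `(h, h_I) = (h, 0)` (so `p = 1`), the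
vector `Λ = (L(-1) + (h/c_{L,I}) I(-1)) v` is a singular vector:
`L(n)Λ = I(n)Λ = 0` for all `n ≥ 1`. -/
theorem singular_vector_p_one {V : Type*} [AddCommGroup V] [Module ℂ V]
    (ρ : HVirRep V) (v : V) (h : ℂ) (hc : ρ.cLI ≠ 0)
    (hLv : ∀ n : ℤ, 0 < n → ρ.L n v = 0) (hIv : ∀ n : ℤ, 0 < n → ρ.I n v = 0)
    (hL0 : ρ.L 0 v = h • v) (hI0 : ρ.I 0 v = 0) :
    ∀ n : ℤ, 1 ≤ n →
      ρ.L n (ρ.L (-1) v + (h / ρ.cLI) • ρ.I (-1) v) = 0 ∧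
      ρ.I n (ρ.L (-1) v + (h / ρ.cLI) • ρ.I (-1) v) = 0 := by
  intro n hn
  simp only [map_add, map_smul, ρ.L_apply_L_neg_one, ρ.L_apply_I_neg_one,
    ρ.I_apply_L_neg_one, ρ.I_apply_I n (-1), hLv n hn, hIv n hn, map_zero, zero_add,
    smul_zero, add_zero]
  obtain rfl | hn2 := hn.eq_or_lt
  · simp only [sub_self, hL0, hI0, if_true, smul_zero, zero_sub, smul_neg, smul_smul,
      ← sub_eq_add_neg, ← sub_smul, and_true]
    convert zero_smul ℂ v using 2
    field_simp
    ring
  · have hpos : 0 < n - 1 := by omega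
    simp [hLv _ hpos, hIv _ hpos, hn2.ne']
end

section
/- Let M(1) be the Heisenberg vertex algebra on the hyperbolic lattice ℂα ⊕ ℂβ with ⟨α,α⟩ = 1, ⟨β,β⟩ = -1, ⟨α,β⟩ = 0, with Virasoro vector ω = (1/2)α(-1)² - (1/2)β(-1)² + λα(-2) + μβ(-2) and Heisenberg vector I = α(-1) + β(-1). Set c_{L,I} = λ - μ ≠ 0 and c_L = 2 - 12(λ² - μ²), and define w = (I(-1)² + 2c_{L,I}I(-2))·1. Then L(0)w = 2w, L(1)w = 0, and L(2)w = -12c_{L,I}²·1. -/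
/-!
Commuting `L(n)` to the right through the (at most two) Heisenberg modes of `w` and killing
it on the vacuum computes `L(n)w` for `n ≥ -1`. The anomaly `(n² + n) c_{L,I}` of
`[L(n), I(-n)]` produces a term `-4c_{L,I} I(-1)𝟙` in `L(1)I(-1)²𝟙`, which the correction
`2c_{L,I} I(-2)𝟙` cancels, and it is the only source of the vacuum component `-12c_{L,I}²𝟙`
of `L(2)w`.
-/

namespace HVirRep

variable {V : Type*} [AddCommGroup V] [Module ℂ V] (ρ : HVirRep V)

theorem L_apply_I (n m : ℤ) (v : V) :
    ρ.L n (ρ.I m v) = ρ.I m (ρ.L n v) - (m : ℂ) • ρ.I (n + m) v -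
      (if n + m = 0 then ((n : ℂ) ^ 2 + n) * ρ.cLI else 0) • v := by
  have h := congrArg (fun f : Module.End ℂ V => f v) (ρ.rel_LI n m)
  simp only [LinearMap.sub_apply, Module.End.mul_apply, LinearMap.smul_apply,
    Module.End.one_apply] at h
  linear_combination (norm := module) h

theorem I_apply_I_comm (n m : ℤ) (v : V) : ρ.I n (ρ.I m v) = ρ.I m (ρ.I n v) :=
  congrArg (fun f : Module.End ℂ V => f v) (ρ.rel_II n m)

def wVector (one : V) : V :=
  ρ.I (-1) (ρ.I (-1) one) + (2 * ρ.cLI) • ρ.I (-2) one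

section Vacuum

variable {ρ} {one : V}

theorem I_apply_I_vacuum_of_nonneg (hI : ∀ n : ℤ, 0 ≤ n → ρ.I n one = 0)
    {n : ℤ} (hn : 0 ≤ n) (m : ℤ) :
    ρ.I n (ρ.I m one) = 0 := by
  rw [I_apply_I_comm, hI n hn, map_zero]

theorem L_apply_I_vacuum (hL : ∀ n : ℤ, -1 ≤ n → ρ.L n one = 0)
    {n : ℤ} (hn : -1 ≤ n) (m : ℤ) :
    ρ.L n (ρ.I m one) = -(m : ℂ) • ρ.I (n + m) one -
      (if n + m = 0 then ((n : ℂ) ^ 2 + n) * ρ.cLI else 0) • one := by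
  rw [L_apply_I, hL n hn, map_zero]
  module

theorem L_apply_I_I_vacuum (hL : ∀ n : ℤ, -1 ≤ n → ρ.L n one = 0)
    {n : ℤ} (hn : -1 ≤ n) (m m' : ℤ) :
    ρ.L n (ρ.I m (ρ.I m' one)) =
      -(m : ℂ) • ρ.I (n + m) (ρ.I m' one) - (m' : ℂ) • ρ.I m (ρ.I (n + m') one) -
        (if n + m' = 0 then ((n : ℂ) ^ 2 + n) * ρ.cLI else 0) • ρ.I m one -
        (if n + m = 0 then ((n : ℂ) ^ 2 + n) * ρ.cLI else 0) • ρ.I m' one := by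
  rw [L_apply_I, L_apply_I_vacuum hL hn]
  simp only [map_sub, map_smul]
  module

theorem L_zero_wVector (hL : ∀ n : ℤ, -1 ≤ n → ρ.L n one = 0) :
    ρ.L 0 (ρ.wVector one) = (2 : ℂ) • ρ.wVector one := by
  rw [wVector, map_add, map_smul, L_apply_I_I_vacuum hL (by norm_num),
    L_apply_I_vacuum hL (by norm_num)]
  norm_num
  module

theorem L_one_wVector (hL : ∀ n : ℤ, -1 ≤ n → ρ.L n one = 0)
    (hI : ∀ n : ℤ, 0 ≤ n → ρ.I n one = 0) : ρ.L 1 (ρ.wVector one) = 0 := by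
  rw [wVector, map_add, map_smul, L_apply_I_I_vacuum hL (by norm_num),
    L_apply_I_vacuum hL (by norm_num)]
  norm_num [I_apply_I_vacuum_of_nonneg hI, hI 0 le_rfl]
  module

theorem L_two_wVector (hL : ∀ n : ℤ, -1 ≤ n → ρ.L n one = 0)
    (hI : ∀ n : ℤ, 0 ≤ n → ρ.I n one = 0) :
    ρ.L 2 (ρ.wVector one) = (-12 * ρ.cLI ^ 2) • one := by
  rw [wVector, map_add, map_smul, L_apply_I_I_vacuum hL (by norm_num),
    L_apply_I_vacuum hL (by norm_num)]
  norm_num [I_apply_I_vacuum_of_nonneg hI, hI]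
  module

end Vacuum

end HVirRep

theorem W22_vector_in_free_field_general {V : Type*} [AddCommGroup V] [Module ℂ V]
    (ρ : HVirRep V)
    (one : V) (hL : ∀ n : ℤ, -1 ≤ n → ρ.L n one = 0)
    (hI : ∀ n : ℤ, 0 ≤ n → ρ.I n one = 0) :
    ρ.L 0 (ρ.I (-1) (ρ.I (-1) one) + (2 * ρ.cLI) • ρ.I (-2) one) =
        (2 : ℂ) • (ρ.I (-1) (ρ.I (-1) one) + (2 * ρ.cLI) • ρ.I (-2) one) ∧
      ρ.L 1 (ρ.I (-1) (ρ.I (-1) one) + (2 * ρ.cLI) • ρ.I (-2) one) = 0 ∧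
      ρ.L 2 (ρ.I (-1) (ρ.I (-1) one) + (2 * ρ.cLI) • ρ.I (-2) one) =
        (-12 * ρ.cLI ^ 2) • one :=
  ⟨HVirRep.L_zero_wVector hL, HVirRep.L_one_wVector hL hI, HVirRep.L_two_wVector hL hI⟩

/-- In the free field realization `M(1)` (abstracted here as a representation of the
twisted Heisenberg-Virasoro algebra with `c_{L,I} = λ - μ ≠ 0`,
`c_L = 2 - 12(λ² - μ²)`, together with a vacuum vector `𝟙` satisfying `L(n)𝟙 = 0` for
`n ≥ -1` and `I(n)𝟙 = 0` for `n ≥ 0`), the vector `w = (I(-1)² + 2c_{L,I} I(-2))𝟙`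
satisfies `L(0)w = 2w`, `L(1)w = 0`, and `L(2)w = -12 c_{L,I}² 𝟙`
(so `w` generates a `W(2,2)`-structure with `c_W = -24 c_{L,I}²`, `L(2)w = (c_W/2)𝟙`). -/
theorem W22_vector_in_free_field {V : Type*} [AddCommGroup V] [Module ℂ V]
    (ρ : HVirRep V) (lam mu : ℂ) (hc : lam - mu ≠ 0)
    (hcLI : ρ.cLI = lam - mu) (hcL : ρ.cL = 2 - 12 * (lam ^ 2 - mu ^ 2))
    (one : V) (hL : ∀ n : ℤ, -1 ≤ n → ρ.L n one = 0)
    (hI : ∀ n : ℤ, 0 ≤ n → ρ.I n one = 0) :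
    ρ.L 0 (ρ.I (-1) (ρ.I (-1) one) + (2 * ρ.cLI) • ρ.I (-2) one) =
        (2 : ℂ) • (ρ.I (-1) (ρ.I (-1) one) + (2 * ρ.cLI) • ρ.I (-2) one) ∧
      ρ.L 1 (ρ.I (-1) (ρ.I (-1) one) + (2 * ρ.cLI) • ρ.I (-2) one) = 0 ∧
      ρ.L 2 (ρ.I (-1) (ρ.I (-1) one) + (2 * ρ.cLI) • ρ.I (-2) one) =
        (-12 * ρ.cLI ^ 2) • one :=
  W22_vector_in_free_field_general ρ one hL hI
end
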